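/- arXiv:2308.14142 — 3 statements merged into one kernel-verified Lean document; each statement's English description precedes it below -/
import Mathlib

section
/- If s : ℝ → ℝ is nonnegative and satisfies |d/dξ s(ξ)| ≤ 2L·√(s(ξ)) for all ξ (for some L > 0), then the function ξ ↦ √(s(ξ)) is L-Lipschitz, i.e. |√(s(ξ)) - √(s(ξ'))| ≤ L|ξ - ξ'| for all ξ, ξ'. -/
/-!
Where `s` vanishes, `√s` need not be differentiable, so apply the mean value inequality to
`√(s + ε)` instead: its derivative `s' / (2√(s + ε))` is bounded by `L` because `√s ≤ √(s + ε)`.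
Letting `ε → 0⁺` gives the bound for `√s`.
-/

open Filter Topology

lemma norm_deriv_sqrt_le {f : ℝ → ℝ} {x L : ℝ} (hfx : 0 < f x) (hf : DifferentiableAt ℝ f x)
    (hderiv : |deriv f x| ≤ 2 * L * √(f x)) :
    ‖deriv (fun y => √(f y)) x‖ ≤ L := by
  have hsqrt : 0 < √(f x) := Real.sqrt_pos.2 hfx
  rw [(hf.hasDerivAt.sqrt hfx.ne').deriv, Real.norm_eq_abs, abs_div,
    abs_of_pos (by positivity : (0 : ℝ) < 2 * √(f x)), div_le_iff₀ (by positivity)]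
  linarith

lemma abs_sqrt_sub_sqrt_le_of_pos {f : ℝ → ℝ} {L : ℝ} (hpos : ∀ x, 0 < f x)
    (hf : Differentiable ℝ f) (hderiv : ∀ x, |deriv f x| ≤ 2 * L * √(f x)) (x y : ℝ) :
    |√(f x) - √(f y)| ≤ L * |x - y| :=
  Convex.norm_image_sub_le_of_norm_deriv_le
    (fun z _ => ((hf z).hasDerivAt.sqrt (hpos z).ne').differentiableAt)
    (fun z _ => norm_deriv_sqrt_le (hpos z) (hf z) (hderiv z)) convex_univ
    (Set.mem_univ y) (Set.mem_univ x)

theorem sqrt_spectral_density_lipschitz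
    (s : ℝ → ℝ) (L : ℝ) (hL : 0 < L)
    (hs_nonneg : ∀ ξ, 0 ≤ s ξ)
    (hs_diff : Differentiable ℝ s)
    (hderiv : ∀ ξ, |deriv s ξ| ≤ 2 * L * Real.sqrt (s ξ)) :
    ∀ ξ ξ' : ℝ, |Real.sqrt (s ξ) - Real.sqrt (s ξ')| ≤ L * |ξ - ξ'| := by
  intro ξ ξ'
  have hreg : ∀ ε > 0, |√(s ξ + ε) - √(s ξ' + ε)| ≤ L * |ξ - ξ'| := fun ε hε =>
    abs_sqrt_sub_sqrt_le_of_pos (f := fun x => s x + ε) (fun x => by linarith [hs_nonneg x])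
      (hs_diff.add_const ε) (fun x => by
        rw [deriv_add_const]
        exact (hderiv x).trans (by gcongr; linarith)) ξ ξ'
  have hlim : Tendsto (fun ε => |√(s ξ + ε) - √(s ξ' + ε)|) (𝓝[>] 0)
      (𝓝 |√(s ξ) - √(s ξ')|) := by
    refine Tendsto.mono_left ?_ nhdsWithin_le_nhds
    have hcont : Continuous fun ε => |√(s ξ + ε) - √(s ξ' + ε)| := by fun_prop
    simpa using hcont.tendsto 0
  exact le_of_tendsto hlim (eventually_nhdsWithin_of_forall hreg)
end

section
/- Let A be an n×n real positive semidefinite matrix and σ² > 0. Then log det(A + σ²I) - log det(B + σ²I) ≤ tr(A - B)/σ² for any positive semidefinite B with A - B positive semidefinite. -/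
/-!
Put `M = B + σ² I` and `D = A - B`, so that `A + σ² I = M + D`. Writing `D = Tᴴ T`, Sylvester's
determinant identity gives `det (M + D) = det M * det (1 + T M⁻¹ Tᴴ)`, and `log x ≤ x - 1` applied
to the eigenvalues of the positive definite matrix `1 + T M⁻¹ Tᴴ` bounds the log-determinant
difference by `tr (M⁻¹ D)`. Finally `M ⪰ σ² I` gives `M⁻¹ ⪯ σ⁻² I`, hence `tr (M⁻¹ D) ≤ tr D / σ²`.
-/

open scoped MatrixOrder ComplexOrder

namespace Matrix

variable {ι : Type*} [Fintype ι] [DecidableEq ι]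

theorem PosSemidef.exists_eq_conjTranspose_mul_self {𝕜 : Type*} [RCLike 𝕜] {D : Matrix ι ι 𝕜}
    (hD : D.PosSemidef) : ∃ T : Matrix ι ι 𝕜, D = Tᴴ * T :=
  CStarAlgebra.nonneg_iff_eq_star_mul_self.mp hD.nonneg

theorem PosDef.log_det_le_trace_sub_card {H : Matrix ι ι ℝ} (hH : H.PosDef) :
    Real.log H.det ≤ H.trace - Fintype.card ι := by
  have hpos := hH.eigenvalues_pos
  calc Real.log H.det = ∑ i, Real.log (hH.isHermitian.eigenvalues i) := by
        rw [hH.isHermitian.det_eq_prod_eigenvalues, ← Real.log_prod fun i _ ↦ (hpos i).ne']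
        simp
    _ ≤ ∑ i, (hH.isHermitian.eigenvalues i - 1) :=
        Finset.sum_le_sum fun i _ ↦ Real.log_le_sub_one_of_pos (hpos i)
    _ = H.trace - Fintype.card ι := by
        simp [Finset.sum_sub_distrib, hH.isHermitian.trace_eq_sum_eigenvalues]

theorem PosDef.log_det_add_sub_log_det_le_trace_inv_mul {M D : Matrix ι ι ℝ} (hM : M.PosDef)
    (hD : D.PosSemidef) : Real.log (M + D).det - Real.log M.det ≤ (M⁻¹ * D).trace := by
  obtain ⟨T, rfl⟩ := hD.exists_eq_conjTranspose_mul_self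
  have hH : (1 + T * M⁻¹ * Tᴴ).PosDef :=
    PosDef.one.add_posSemidef (hM.inv.posSemidef.mul_mul_conjTranspose_same T)
  have hdet : (M + Tᴴ * T).det = M.det * (1 + T * M⁻¹ * Tᴴ).det := by
    rw [Matrix.mul_assoc, ← det_one_add_mul_comm, ← det_mul, mul_add, mul_one, ← Matrix.mul_assoc,
      mul_nonsing_inv_cancel_left _ _ (isUnit_iff_ne_zero.mpr hM.det_pos.ne')]
  have htr : (1 + T * M⁻¹ * Tᴴ).trace - Fintype.card ι = (M⁻¹ * (Tᴴ * T)).trace := by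
    rw [trace_add, trace_one, add_sub_cancel_left, Matrix.mul_assoc, trace_mul_comm,
      Matrix.mul_assoc]
  rw [hdet, Real.log_mul hM.det_pos.ne' hH.det_pos.ne', add_sub_cancel_left, ← htr]
  exact hH.log_det_le_trace_sub_card

theorem posSemidef_inv_smul_one_sub_inv {M : Matrix ι ι ℝ} {c : ℝ} (hc : 0 < c)
    (hM : (M - c • 1).PosSemidef) : (c⁻¹ • 1 - M⁻¹).PosSemidef := by
  have hMpd : M.PosDef := by simpa using PosDef.posSemidef_add hM (PosDef.one.smul hc)
  have hinv : M⁻¹ᴴ = M⁻¹ := hMpd.inv.isHermitian.eq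
  set X := 1 - c • M⁻¹
  have hX : Xᴴ = X := by
    rw [conjTranspose_sub, conjTranspose_smul, conjTranspose_one, hinv, star_trivial]
  -- `M⁻¹` commutes with `M - c • 1`, which lets `c⁻¹ • 1 - M⁻¹ = c⁻¹ M⁻¹ (M - c • 1)` be split
  -- into a congruence of `M - c • 1` and a Gram matrix.
  have key : c⁻¹ • 1 - M⁻¹ = M⁻¹ * (M - c • 1) * M⁻¹ᴴ + c⁻¹ • (Xᴴ * X) := by
    rw [hinv, hX]
    simp only [X, Matrix.mul_sub, Matrix.sub_mul, Matrix.mul_smul, Matrix.smul_mul,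
      Matrix.mul_one, Matrix.one_mul, nonsing_inv_mul _ (isUnit_iff_ne_zero.mpr hMpd.det_pos.ne')]
    match_scalars <;> field_simp <;> ring
  rw [key]
  exact (hM.mul_mul_conjTranspose_same M⁻¹).add
    ((posSemidef_conjTranspose_mul_self X).smul (inv_nonneg.mpr hc.le))

theorem trace_inv_mul_le_trace_div {M D : Matrix ι ι ℝ} {c : ℝ} (hc : 0 < c)
    (hM : (M - c • 1).PosSemidef) (hD : D.PosSemidef) : (M⁻¹ * D).trace ≤ D.trace / c := by
  obtain ⟨T, rfl⟩ := hD.exists_eq_conjTranspose_mul_self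
  have h := ((posSemidef_inv_smul_one_sub_inv hc hM).mul_mul_conjTranspose_same T).trace_nonneg
  rw [Matrix.mul_sub, Matrix.sub_mul, trace_sub, Matrix.mul_smul, Matrix.smul_mul, trace_smul,
    mul_one, trace_mul_comm T, Matrix.mul_assoc, trace_mul_comm T, sub_nonneg] at h
  rwa [← Matrix.mul_assoc, div_eq_inv_mul]

end Matrix

theorem logdet_diff_le_trace_div_general
    {n : ℕ} (A B : Matrix (Fin n) (Fin n) ℝ) (σ2 : ℝ) (hσ : 0 < σ2)
    (hB : B.PosSemidef) (hAB : (A - B).PosSemidef) :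
    Real.log (A + σ2 • (1 : Matrix (Fin n) (Fin n) ℝ)).det -
        Real.log (B + σ2 • (1 : Matrix (Fin n) (Fin n) ℝ)).det ≤
      (A - B).trace / σ2 := by
  set M := B + σ2 • (1 : Matrix (Fin n) (Fin n) ℝ)
  have hM : M.PosDef := Matrix.PosDef.posSemidef_add hB (Matrix.PosDef.one.smul hσ)
  calc _ = Real.log (M + (A - B)).det - Real.log M.det := by congr 3; simp only [M]; abel
    _ ≤ (M⁻¹ * (A - B)).trace := hM.log_det_add_sub_log_det_le_trace_inv_mul hAB
    _ ≤ (A - B).trace / σ2 := Matrix.trace_inv_mul_le_trace_div hσ (by simpa [M] using hB) hAB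

theorem logdet_diff_le_trace_div
    {n : ℕ} (A B : Matrix (Fin n) (Fin n) ℝ) (σ2 : ℝ) (hσ : 0 < σ2)
    (hA : A.PosSemidef) (hB : B.PosSemidef) (hAB : (A - B).PosSemidef) :
    Real.log (A + σ2 • (1 : Matrix (Fin n) (Fin n) ℝ)).det -
        Real.log (B + σ2 • (1 : Matrix (Fin n) (Fin n) ℝ)).det ≤
      (A - B).trace / σ2 :=
  logdet_diff_le_trace_div_general A B σ2 hσ hB hAB
end

section
/- Let Σ_u(T) denote the optimal variational precision after transforming features by invertible T: if the optimal parameters for features u' are Σ_{u'}⁻¹ = K_{u'u'}⁻¹(K_{u'u'} + σ⁻²K_{u'f}K_{u'f}*)K_{u'u'}⁻¹ and μ_{u'} = σ⁻²Σ_{u'}K_{u'u'}⁻¹K_{u'f}y, then for u = Tu' the corresponding optimal parameters satisfy Σ_u⁻¹ = T⁻* Σ_{u'}⁻¹ T⁻¹ and μ_u = T μ_{u'}. -/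
/-!
Writing `u = T u'`, the prior covariance and the cross-covariance become `T K' Tᴴ` and `T C'`, so
`K + σ⁻² C Cᴴ` is conjugated to `T (K' + σ⁻² C' C'ᴴ) Tᴴ` while `K⁻¹ = T⁻ᴴ K'⁻¹ T⁻¹`. In the precision
`K⁻¹ (K + σ⁻² C Cᴴ) K⁻¹` the inner factors `T⁻¹ T` and `Tᴴ T⁻ᴴ` cancel, and inverting it again gives
`T Σ' Tᴴ`, whose product with `K⁻¹ C y` collapses to `T Σ' K'⁻¹ C' y`.
-/

open Matrix ComplexOrder

namespace Matrix

variable {m n R : Type*} [Fintype m] [Fintype n] [CommRing R] [StarRing R]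

theorem mul_mul_conjTranspose_add_smul (T K : Matrix m m R) (C : Matrix m n R) (c : R) :
    T * K * Tᴴ + c • (T * C * (T * C)ᴴ) = T * (K + c • (C * Cᴴ)) * Tᴴ := by
  simp only [conjTranspose_mul, Matrix.mul_add, Matrix.add_mul, Matrix.mul_smul, Matrix.smul_mul,
    Matrix.mul_assoc]

variable [DecidableEq m]

/-- The optimal precision `Σ⁻¹` for prior covariance `K`, cross-covariance `C` and `c = σ⁻²`. -/
noncomputable def optimalPrecision (K : Matrix m m R) (C : Matrix m n R) (c : R) : Matrix m m R :=
  K⁻¹ * (K + c • (C * Cᴴ)) * K⁻¹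

noncomputable def optimalMean (K : Matrix m m R) (C : Matrix m n R) (c : R) (y : n → R) : m → R :=
  c • (optimalPrecision K C c)⁻¹ *ᵥ K⁻¹ *ᵥ C *ᵥ y

theorem mul_mul_conjTranspose_inv (T K : Matrix m m R) : (T * K * Tᴴ)⁻¹ = Tᴴ⁻¹ * K⁻¹ * T⁻¹ := by
  rw [mul_inv_rev, mul_inv_rev, Matrix.mul_assoc]

theorem optimalPrecision_mul_mul_conjTranspose {T : Matrix m m R} (hT : IsUnit T.det)
    (K : Matrix m m R) (C : Matrix m n R) (c : R) :
    optimalPrecision (T * K * Tᴴ) (T * C) c = Tᴴ⁻¹ * optimalPrecision K C c * T⁻¹ := by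
  have hT' : IsUnit Tᴴ.det := det_conjTranspose T ▸ hT.star
  rw [optimalPrecision, optimalPrecision, mul_mul_conjTranspose_add_smul,
    mul_mul_conjTranspose_inv]
  simp only [Matrix.mul_assoc, nonsing_inv_mul_cancel_left _ _ hT,
    mul_nonsing_inv_cancel_left _ _ hT']

theorem optimalMean_mul_mul_conjTranspose {T : Matrix m m R} (hT : IsUnit T.det)
    (K : Matrix m m R) (C : Matrix m n R) (c : R) (y : n → R) :
    optimalMean (T * K * Tᴴ) (T * C) c y = T *ᵥ optimalMean K C c y := by
  have hT' : IsUnit Tᴴ.det := det_conjTranspose T ▸ hT.star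
  have hcov :
      (optimalPrecision (T * K * Tᴴ) (T * C) c)⁻¹ = T * (optimalPrecision K C c)⁻¹ * Tᴴ := by
    rw [optimalPrecision_mul_mul_conjTranspose hT, mul_inv_rev, mul_inv_rev,
      nonsing_inv_nonsing_inv _ hT, nonsing_inv_nonsing_inv _ hT', Matrix.mul_assoc]
  rw [optimalMean, optimalMean, hcov, mul_mul_conjTranspose_inv, mulVec_smul]
  simp only [mulVec_mulVec, Matrix.mul_assoc, nonsing_inv_mul_cancel_left _ _ hT,
    mul_nonsing_inv_cancel_left _ _ hT']

end Matrix

theorem optimal_variational_params_transform_general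
    {M N : ℕ} (K' : Matrix (Fin M) (Fin M) ℂ)
    (C' : Matrix (Fin M) (Fin N) ℂ)
    (T : Matrix (Fin M) (Fin M) ℂ) (hT : IsUnit T.det)
    (σ : ℝ) (y : Fin N → ℂ) :
    let Kuu := T * K' * Tᴴ
    let Kuf := T * C'
    let Sinv' := K'⁻¹ * (K' + ((σ : ℂ) ^ 2)⁻¹ • (C' * C'ᴴ)) * K'⁻¹
    let Sinv := Kuu⁻¹ * (Kuu + ((σ : ℂ) ^ 2)⁻¹ • (Kuf * Kufᴴ)) * Kuu⁻¹
    let μ' := ((σ : ℂ) ^ 2)⁻¹ • (Sinv'⁻¹).mulVec ((K'⁻¹).mulVec (C'.mulVec y))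
    let μ := ((σ : ℂ) ^ 2)⁻¹ • (Sinv⁻¹).mulVec ((Kuu⁻¹).mulVec (Kuf.mulVec y))
    Sinv = (Tᴴ)⁻¹ * Sinv' * T⁻¹ ∧ μ = T.mulVec μ' :=
  ⟨optimalPrecision_mul_mul_conjTranspose hT K' C' _,
    optimalMean_mul_mul_conjTranspose hT K' C' _ y⟩

theorem optimal_variational_params_transform
    {M N : ℕ} (K' : Matrix (Fin M) (Fin M) ℂ) (hK' : K'.PosDef)
    (C' : Matrix (Fin M) (Fin N) ℂ)
    (T : Matrix (Fin M) (Fin M) ℂ) (hT : IsUnit T.det)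
    (σ : ℝ) (hσ : 0 < σ) (y : Fin N → ℂ) :
    let Kuu := T * K' * Tᴴ
    let Kuf := T * C'
    let Sinv' := K'⁻¹ * (K' + ((σ : ℂ) ^ 2)⁻¹ • (C' * C'ᴴ)) * K'⁻¹
    let Sinv := Kuu⁻¹ * (Kuu + ((σ : ℂ) ^ 2)⁻¹ • (Kuf * Kufᴴ)) * Kuu⁻¹
    let μ' := ((σ : ℂ) ^ 2)⁻¹ • (Sinv'⁻¹).mulVec ((K'⁻¹).mulVec (C'.mulVec y))
    let μ := ((σ : ℂ) ^ 2)⁻¹ • (Sinv⁻¹).mulVec ((Kuu⁻¹).mulVec (Kuf.mulVec y))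
    Sinv = (Tᴴ)⁻¹ * Sinv' * T⁻¹ ∧ μ = T.mulVec μ' :=
  optimal_variational_params_transform_general K' C' T hT σ y
end
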